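/- Let d : ℕ → A be admissible and eventually periodic. Then the set { j ∈ ℕ | ∃ k < j, σ^k d = σ^j d } is nonempty; let p be its least element. Then for every n ∈ ℕ: if n < p then |F(n)| = n + 1, and if n ≥ p then |F(n)| = p. -/

import Mathlib

namespace BetaShift

variable {A : Type*}

/-- The shift map: `(shift x) n = x (n+1)`. -/
def shift (x : ℕ → A) : ℕ → A := fun n => x (n + 1)

/-- Lexicographic order on one-sided sequences: `x = y`, or there is an index `i`
such that `x j = y j` for all `j < i` and `x i < y i`. -/
def SeqLe [LinearOrder A] (x y : ℕ → A) : Prop :=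
  x = y ∨ ∃ i, (∀ j, j < i → x j = y j) ∧ x i < y i

/-- A word `w` occurs in the sequence `x`. -/
def Occurs (w : List A) (x : ℕ → A) : Prop :=
  ∃ i : ℕ, ∀ j : Fin w.length, x (i + j) = w.get j

/-- `Complexity x n` is the number `Φ_n(x)` of distinct words of length `n` occurring in `x`. -/
noncomputable def Complexity (x : ℕ → A) (n : ℕ) : ℕ :=
  Set.ncard {w : List A | w.length = n ∧ Occurs w x}

/-- A sequence is eventually periodic if there are `p ≥ 1` and `N` with
`d (i + p) = d i` for all `i ≥ N`. -/
def EventuallyPeriodic (d : ℕ → A) : Prop :=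
  ∃ p, 1 ≤ p ∧ ∃ N, ∀ i, N ≤ i → d (i + p) = d i

/-- `(d)_k`, the `k`-letter prefix of the sequence `d`, as a word. -/
def prefixWord (d : ℕ → A) (k : ℕ) : List A := List.ofFn (fun i : Fin k => d i)

variable {m : ℕ}

/-- `d` is admissible: every shift of `d` is lexicographically ≤ `d`,
and `d` is not eventually `0`. -/
def Admissible (d : ℕ → Fin m) : Prop :=
  (∀ i, SeqLe (shift^[i] d) d) ∧ ∀ N, ∃ i, N ≤ i ∧ (d i).val ≠ 0

/-- The one-sided β-shift `X_d` determined by the admissible sequence `d`. -/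
def XSet (d : ℕ → Fin m) : Set (ℕ → Fin m) :=
  {x | ∀ i, SeqLe (shift^[i] x) d}

/-- The language of `X_d`: all words occurring in some point of `X_d`. -/
def Lang (d : ℕ → Fin m) : Set (List (Fin m)) :=
  {w | ∃ x ∈ XSet d, Occurs w x}

/-- The follower set of the word `w` in `X_d`. -/
def Fol (d : ℕ → Fin m) (w : List (Fin m)) : Set (List (Fin m)) :=
  {u | w ++ u ∈ Lang d}

/-- The predecessor set of the word `w` in `X_d`. -/
def Pred (d : ℕ → Fin m) (w : List (Fin m)) : Set (List (Fin m)) :=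
  {s | s ++ w ∈ Lang d}

/-- The extender set of the word `w` in `X_d`. -/
def Ext (d : ℕ → Fin m) (w : List (Fin m)) : Set (List (Fin m) × List (Fin m)) :=
  {p | p.1 ++ w ++ p.2 ∈ Lang d}

/-- `|F(n)|`: the number of distinct follower sets of words of length `n` in `X_d`. -/
noncomputable def FolCount (d : ℕ → Fin m) (n : ℕ) : ℕ :=
  Set.ncard {S | ∃ w ∈ Lang d, w.length = n ∧ S = Fol d w}

/-- `|P(n)|`: the number of distinct predecessor sets of words of length `n` in `X_d`. -/
noncomputable def PredCount (d : ℕ → Fin m) (n : ℕ) : ℕ :=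
  Set.ncard {S | ∃ w ∈ Lang d, w.length = n ∧ S = Pred d w}

/-- `|E(n)|`: the number of distinct extender sets of words of length `n` in `X_d`. -/
noncomputable def ExtCount (d : ℕ → Fin m) (n : ℕ) : ℕ :=
  Set.ncard {S | ∃ w ∈ Lang d, w.length = n ∧ S = Ext d w}

/-- The largest `k ≤ n` such that the `k`-letter prefix of `d` is a suffix of `v`
(`k = 0`, the empty prefix, always works). -/
def classIndex (d : ℕ → Fin m) (n : ℕ) (v : List (Fin m)) : ℕ :=
  Nat.findGreatest (fun k => prefixWord d k <:+ v) n

/-- Lexicographic comparison of (equal-length) words: `u = v`, or at the first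
index where they differ, `u` takes the smaller value. -/
def WordLe [LinearOrder A] (u v : List A) : Prop :=
  u = v ∨ ∃ i, ∃ (hu : i < u.length) (hv : i < v.length),
    (∀ j (hju : j < u.length) (hjv : j < v.length), j < i → u.get ⟨j, hju⟩ = v.get ⟨j, hjv⟩) ∧
    u.get ⟨i, hu⟩ < v.get ⟨i, hv⟩

end BetaShift

/-!
A follower set of the β-shift only depends on the longest suffix of the word that is a prefix
`d₁ ⋯ d_k` of `d`: the word `w` may be followed by `u` exactly when `u` is admissible and
`u ⪯ σ^k d`. Conversely every `k ≤ n` is attained by the word `0^{n-k} d₁ ⋯ d_k`, and different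
shifts `σ^k d` give different follower sets. Hence the follower sets of words of length `n` are
in bijection with the distinct sequences among `σ^0 d, …, σ^n d`, and counting these along the
eventually periodic orbit of `d` gives `min (n + 1) p`.
-/

namespace BetaShift

section Iterate

variable {α : Type*} (f : α → α) (x : α)

theorem injOn_iterate_Iio_sInf :
    Set.InjOn (f^[·] x) (Set.Iio (sInf {j | ∃ k < j, f^[k] x = f^[j] x})) := by
  intro a ha b hb h
  by_contra hab
  rcases lt_or_gt_of_ne hab with hlt | hlt
  · exact (Nat.sInf_le (s := {j | ∃ k < j, f^[k] x = f^[j] x}) ⟨a, hlt, h⟩).not_gt hb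
  · exact (Nat.sInf_le (s := {j | ∃ k < j, f^[k] x = f^[j] x}) ⟨b, hlt, h.symm⟩).not_gt ha

theorem iterate_mem_image_Iio_sInf (hS : {j | ∃ k < j, f^[k] x = f^[j] x}.Nonempty) (n : ℕ) :
    f^[n] x ∈ (f^[·] x) '' Set.Iio (sInf {j | ∃ k < j, f^[k] x = f^[j] x}) := by
  set p := sInf {j | ∃ k < j, f^[k] x = f^[j] x}
  obtain ⟨k, hkp, hk⟩ : ∃ k < p, f^[k] x = f^[p] x := Nat.sInf_mem hS
  induction n using Nat.strong_induction_on with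
  | _ n ih =>
    by_cases hn : n < p
    · exact ⟨n, hn, rfl⟩
    have hback : f^[n] x = f^[n - p + k] x := by
      rw [Function.iterate_add_apply, hk, ← Function.iterate_add_apply, Nat.sub_add_cancel
        (not_lt.mp hn)]
    rw [hback]
    exact ih _ (by omega)

theorem ncard_image_iterate_Iic (hS : {j | ∃ k < j, f^[k] x = f^[j] x}.Nonempty) (n : ℕ) :
    ((f^[·] x) '' Set.Iic n).ncard = min (n + 1) (sInf {j | ∃ k < j, f^[k] x = f^[j] x}) := by
  set p := sInf {j | ∃ k < j, f^[k] x = f^[j] x}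
  rcases lt_or_ge n p with hn | hn
  · rw [((injOn_iterate_Iio_sInf f x).mono (Set.Iic_subset_Iio.mpr hn)).ncard_image,
      Set.ncard_Iic_nat, min_eq_left hn]
  · have himage : (f^[·] x) '' Set.Iic n = (f^[·] x) '' Set.Iio p :=
      Set.Subset.antisymm (Set.image_subset_iff.mpr fun k _ => iterate_mem_image_Iio_sInf f x hS k)
        (Set.image_mono (Set.Iio_subset_Iic_self.trans (Set.Iic_subset_Iic.mpr hn)))
    rw [himage, (injOn_iterate_Iio_sInf f x).ncard_image, Set.ncard_Iio_nat,
      min_eq_right (by omega)]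

end Iterate

section LinearOrder

variable {A : Type*}

theorem iterate_shift_apply (k : ℕ) (x : ℕ → A) (n : ℕ) : shift^[k] x n = x (k + n) := by
  induction k generalizing x with
  | zero => simp
  | succ k ih =>
    rw [Function.iterate_succ_apply, ih]
    simp only [shift]
    congr 1
    omega

@[simp]
theorem length_prefixWord (x : ℕ → A) (n : ℕ) : (prefixWord x n).length = n :=
  List.length_ofFn

@[simp]
theorem getElem_prefixWord (x : ℕ → A) {n j : ℕ} (h : j < (prefixWord x n).length) :
    (prefixWord x n)[j] = x j :=
  List.getElem_ofFn h

theorem eq_prefixWord_iff {w : List A} {x : ℕ → A} :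
    w = prefixWord x w.length ↔ ∀ j (hj : j < w.length), w[j] = x j := by
  refine ⟨fun h j hj => ?_, fun h => List.ext_getElem (by simp) fun j hj _ => by simp [h j hj]⟩
  rw [List.getElem_of_eq h hj, getElem_prefixWord]

theorem prefixWord_eq_prefixWord_iff {x y : ℕ → A} {n : ℕ} :
    prefixWord x n = prefixWord y n ↔ ∀ j < n, x j = y j := by
  simp only [prefixWord, List.ofFn_inj, funext_iff, Fin.forall_iff]

theorem drop_prefixWord (x : ℕ → A) (n i : ℕ) :
    (prefixWord x n).drop i = prefixWord (shift^[i] x) (n - i) := by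
  refine List.ext_getElem (by simp) fun j _ _ => ?_
  simp [iterate_shift_apply]

theorem occurs_iff {w : List A} {x : ℕ → A} :
    Occurs w x ↔ ∃ i, w = prefixWord (shift^[i] x) w.length := by
  simp only [Occurs, eq_prefixWord_iff, iterate_shift_apply, List.get_eq_getElem, Fin.forall_iff]
  exact exists_congr fun i => ⟨fun h j hj => (h j hj).symm, fun h j hj => (h j hj).symm⟩

theorem EventuallyPeriodic.nonempty_iterate_shift_eq {d : ℕ → A}
    (hper : EventuallyPeriodic d) : {j | ∃ k < j, shift^[k] d = shift^[j] d}.Nonempty := by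
  obtain ⟨p, hp, N, hN⟩ := hper
  refine ⟨N + p, N, by omega, funext fun t => ?_⟩
  rw [iterate_shift_apply, iterate_shift_apply, ← hN (N + t) (by omega)]
  congr 1
  omega

variable [LinearOrder A]

theorem seqLe_iff {x y : ℕ → A} :
    SeqLe x y ↔ ∀ i, (∀ j < i, x j = y j) → x i ≤ y i := by
  constructor
  · rintro (rfl | ⟨i₀, hpre, hlt⟩) i hi
    · exact le_rfl
    · rcases lt_trichotomy i i₀ with h | rfl | h
      · exact (hpre i h).le
      · exact hlt.le
      · exact absurd (hi i₀ h) hlt.ne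
  · intro h
    by_cases hxy : x = y
    · exact Or.inl hxy
    · have hne : ∃ j, x j ≠ y j := Function.ne_iff.mp hxy
      classical
      have hpre : ∀ j < Nat.find hne, x j = y j := fun j hj => not_not.mp (Nat.find_min hne hj)
      exact Or.inr ⟨Nat.find hne, hpre, (h _ hpre).lt_of_ne (Nat.find_spec hne)⟩

theorem SeqLe.antisymm {x y : ℕ → A} (hxy : SeqLe x y) (hyx : SeqLe y x) : x = y := by
  rw [seqLe_iff] at hxy hyx
  funext n
  induction n using Nat.strong_induction_on with
  | _ n ih => exact le_antisymm (hxy n ih) (hyx n fun j hj => (ih j hj).symm)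

theorem SeqLe.iterate_shift {x y : ℕ → A} (h : SeqLe x y) {r : ℕ} (hr : ∀ j < r, x j = y j) :
    SeqLe (shift^[r] x) (shift^[r] y) := by
  rcases h with rfl | ⟨i, hpre, hlt⟩
  · exact Or.inl rfl
  · have hri : r ≤ i := by
      by_contra! h
      exact hlt.ne (hr i h)
    refine Or.inr ⟨i - r, fun j hj => ?_, ?_⟩
    · rw [iterate_shift_apply, iterate_shift_apply]
      exact hpre _ (by omega)
    · rw [iterate_shift_apply, iterate_shift_apply, Nat.add_sub_cancel' hri]
      exact hlt

def WordLeSeq (u : List A) (x : ℕ → A) : Prop :=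
  ∀ t (ht : t < u.length), (∀ j (hj : j < t), u[j] = x j) → u[t] ≤ x t

theorem wordLeSeq_prefixWord (x : ℕ → A) (n : ℕ) : WordLeSeq (prefixWord x n) x :=
  fun _ _ _ => (getElem_prefixWord x _).le

theorem WordLeSeq.trans_seqLe {u : List A} {x y : ℕ → A} (hu : WordLeSeq u x)
    (hxy : SeqLe x y) : WordLeSeq u y := by
  rcases hxy with rfl | ⟨i, hpre, hlt⟩
  · exact hu
  intro t ht hagree
  have hux : ∀ j (hj : j < t), j < i → u[j] = x j :=
    fun j hj hji => (hagree j hj).trans (hpre j hji).symm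
  rcases lt_trichotomy t i with hti | rfl | hit
  · rw [← hpre t hti]
    exact hu t ht fun j hj => hux j hj (hj.trans hti)
  · exact (hu t ht fun j hj => hux j hj hj).trans hlt.le
  · exact absurd (hagree i hit)
      ((hu i (hit.trans ht) fun j hj => hux j (hj.trans hit) hj).trans_lt hlt).ne

theorem seqLe_of_forall_wordLeSeq {x y : ℕ → A} (h : ∀ n, WordLeSeq (prefixWord x n) y) :
    SeqLe x y := by
  rw [seqLe_iff]
  intro t ht
  simpa using h (t + 1) t (by simp) fun j hj => by simpa using ht j hj

theorem wordLeSeq_append_iff {v u : List A} {x : ℕ → A} :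
    WordLeSeq (v ++ u) x ↔
      WordLeSeq v x ∧ (v = prefixWord x v.length → WordLeSeq u (shift^[v.length] x)) := by
  constructor
  · intro h
    refine ⟨fun t ht hag => ?_, fun hv t ht hag => ?_⟩
    · have := h t (by simp; omega) fun j hj => by
        rw [List.getElem_append_left (by omega)]
        exact hag j hj
      rwa [List.getElem_append_left ht] at this
    · have := h (v.length + t) (by simp; omega) fun j hj => by
        by_cases hjv : j < v.length
        · rw [List.getElem_append_left hjv]
          exact eq_prefixWord_iff.mp hv j hjv
        · rw [List.getElem_append_right (by omega), hag (j - v.length) (by omega),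
            iterate_shift_apply, Nat.add_sub_cancel' (by omega)]
      rw [iterate_shift_apply]
      simpa using this
  · rintro ⟨hv, hu⟩ t ht hag
    by_cases htv : t < v.length
    · rw [List.getElem_append_left htv]
      exact hv t htv fun j hj => by simpa [List.getElem_append_left (hj.trans htv)] using hag j hj
    · have hv' : v = prefixWord x v.length := eq_prefixWord_iff.mpr fun j hj => by
        simpa [List.getElem_append_left hj] using hag j (by omega)
      rw [List.getElem_append_right (by omega)]
      have := hu hv' (t - v.length) (by simp at ht; omega) fun j hj => by
        rw [iterate_shift_apply]
        simpa using hag (v.length + j) (by omega)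
      rwa [iterate_shift_apply, Nat.add_sub_cancel' (by omega)] at this

end LinearOrder

variable {m : ℕ} {d : ℕ → Fin m}

def AdmissibleWord (d : ℕ → Fin m) (w : List (Fin m)) : Prop :=
  ∀ i, WordLeSeq (w.drop i) d

theorem iterate_shift_mem_xSet {x : ℕ → Fin m} (hx : x ∈ XSet d) (k : ℕ) :
    shift^[k] x ∈ XSet d := fun i => by
  rw [← Function.iterate_add_apply]
  exact hx (i + k)

theorem admissibleWord_prefixWord {x : ℕ → Fin m} (hx : x ∈ XSet d) (n : ℕ) :
    AdmissibleWord d (prefixWord x n) := fun i => by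
  rw [drop_prefixWord]
  exact (wordLeSeq_prefixWord _ _).trans_seqLe (hx i)

theorem admissibleWord_replicate_zero [NeZero m] (n : ℕ) :
    AdmissibleWord d (List.replicate n 0) :=
  fun _ _ _ _ => by simp

theorem mem_lang_iff [NeZero m] {w : List (Fin m)} : w ∈ Lang d ↔ AdmissibleWord d w := by
  constructor
  · rintro ⟨x, hx, hocc⟩
    obtain ⟨i, hi⟩ := occurs_iff.mp hocc
    rw [hi]
    exact admissibleWord_prefixWord (iterate_shift_mem_xSet hx i) _
  · intro hw
    -- pad `w` with zeros, which never make a suffix exceed `d`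
    refine ⟨fun j => if h : j < w.length then w[j] else 0, fun i => ?_,
      occurs_iff.mpr ⟨0, eq_prefixWord_iff.mpr fun j hj => by simp [hj]⟩⟩
    rw [seqLe_iff]
    intro t hag
    simp only [iterate_shift_apply] at hag ⊢
    split_ifs with h
    · refine (hw i t (by simp; omega) fun j hj => ?_).trans_eq' (by simp)
      simpa [show i + j < w.length by omega] using hag j hj
    · exact Fin.zero_le _

theorem admissibleWord_append_iff {w u : List (Fin m)} :
    AdmissibleWord d (w ++ u) ↔ AdmissibleWord d w ∧ AdmissibleWord d u ∧
      ∀ r, prefixWord d r <:+ w → WordLeSeq u (shift^[r] d) := by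
  constructor
  · intro h
    refine ⟨fun i => ?_, fun i => ?_, fun r hr => ?_⟩
    · have := h i
      rw [List.drop_append] at this
      exact (wordLeSeq_append_iff.mp this).1
    · simpa [List.drop_length_add_append] using h (w.length + i)
    · have hrw : r ≤ w.length := by simpa using hr.length_le
      have hdrop : w.drop (w.length - r) = prefixWord d r := by
        simpa using (List.suffix_iff_eq_drop.mp hr).symm
      have := h (w.length - r)
      rw [List.drop_append_of_le_length (by omega), wordLeSeq_append_iff, hdrop] at this
      simpa using this.2 (by simp)
  · rintro ⟨hw, hu, hr⟩ i
    rw [List.drop_append, wordLeSeq_append_iff]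
    refine ⟨hw i, fun hpre => ?_⟩
    rcases le_or_gt i w.length with hi | hi
    · rw [Nat.sub_eq_zero_of_le hi, List.drop_zero]
      refine hr _ (List.suffix_iff_eq_drop.mpr ?_)
      rw [length_prefixWord, show w.length - (w.drop i).length = i by simp; omega]
      exact hpre.symm
    · simpa [List.drop_eq_nil_of_le hi.le] using hu (i - w.length)

theorem prefixWord_classIndex_suffix (d : ℕ → Fin m) (w : List (Fin m)) :
    prefixWord d (classIndex d w.length w) <:+ w :=
  Nat.findGreatest_spec (P := fun k => prefixWord d k <:+ w) (Nat.zero_le _)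
    (by simp [prefixWord])

theorem le_classIndex {w : List (Fin m)} {r : ℕ} (hr : prefixWord d r <:+ w) :
    r ≤ classIndex d w.length w :=
  Nat.le_findGreatest (by simpa using hr.length_le) hr

theorem Admissible.seqLe_iterate_shift_of_suffix (hd : Admissible d) {r k : ℕ}
    (h : prefixWord d r <:+ prefixWord d k) : SeqLe (shift^[k] d) (shift^[r] d) := by
  have hrk : r ≤ k := by simpa using h.length_le
  have hagree : prefixWord (shift^[k - r] d) r = prefixWord d r := by
    simpa [drop_prefixWord, Nat.sub_sub_self hrk] using (List.suffix_iff_eq_drop.mp h).symm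
  have := (hd.1 (k - r)).iterate_shift (prefixWord_eq_prefixWord_iff.mp hagree)
  rwa [← Function.iterate_add_apply, Nat.add_sub_cancel' hrk] at this

def followerOf (d y : ℕ → Fin m) : Set (List (Fin m)) :=
  {u | AdmissibleWord d u ∧ WordLeSeq u y}

theorem Admissible.forall_suffix_wordLeSeq_iff (hd : Admissible d) {w u : List (Fin m)} :
    (∀ r, prefixWord d r <:+ w → WordLeSeq u (shift^[r] d)) ↔
      WordLeSeq u (shift^[classIndex d w.length w] d) := by
  refine ⟨fun h => h _ (prefixWord_classIndex_suffix d w), fun h r hr => ?_⟩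
  have hsuffix : prefixWord d r <:+ prefixWord d (classIndex d w.length w) :=
    List.suffix_of_suffix_length_le hr (prefixWord_classIndex_suffix d w)
      (by simpa using le_classIndex hr)
  exact h.trans_seqLe (hd.seqLe_iterate_shift_of_suffix hsuffix)

theorem Admissible.fol_eq [NeZero m] (hd : Admissible d) {w : List (Fin m)} (hw : w ∈ Lang d) :
    Fol d w = followerOf d (shift^[classIndex d w.length w] d) := by
  ext u
  change w ++ u ∈ Lang d ↔ AdmissibleWord d u ∧ _
  rw [mem_lang_iff, admissibleWord_append_iff, ← hd.forall_suffix_wordLeSeq_iff]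
  exact ⟨fun h => h.2, fun h => ⟨mem_lang_iff.mp hw, h⟩⟩

theorem followerOf_injOn : Set.InjOn (followerOf d) (XSet d) := by
  have hle : ∀ {y y'}, y ∈ XSet d → followerOf d y = followerOf d y' → SeqLe y y' :=
    fun hy h => seqLe_of_forall_wordLeSeq fun n =>
      (h ▸ ⟨admissibleWord_prefixWord hy n, wordLeSeq_prefixWord _ n⟩ :
        prefixWord _ n ∈ followerOf d _).2
  exact fun y hy y' hy' h => (hle hy h).antisymm (hle hy' h.symm)

theorem Admissible.apply_zero_ne_zero [NeZero m] (hd : Admissible d) : d 0 ≠ 0 := by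
  obtain ⟨i, -, hi⟩ := hd.2 0
  have hle : d i ≤ d 0 := by simpa [iterate_shift_apply] using seqLe_iff.mp (hd.1 i) 0 (by simp)
  intro h0
  rw [h0, nonpos_iff_eq_zero] at hle
  exact hi (by simp [hle])

theorem Admissible.not_prefixWord_suffix_replicate_append [NeZero m] (hd : Admissible d)
    {r j : ℕ} {v : List (Fin m)} (hr : v.length < r) :
    ¬ prefixWord d r <:+ List.replicate j 0 ++ v := by
  intro h
  have hlen : r ≤ j + v.length := by simpa using h.length_le
  have := List.getElem_of_eq (List.suffix_iff_eq_drop.mp h) (by simp; omega : 0 < _)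
  simp only [getElem_prefixWord, List.getElem_drop] at this
  rw [List.getElem_append_left (by simp; omega), List.getElem_replicate] at this
  exact hd.apply_zero_ne_zero this

theorem Admissible.exists_mem_lang_classIndex_eq [NeZero m] (hd : Admissible d) {n k : ℕ}
    (hk : k ≤ n) : ∃ w ∈ Lang d, w.length = n ∧ classIndex d n w = k := by
  set w := List.replicate (n - k) (0 : Fin m) ++ prefixWord d k
  have hlen : w.length = n := by simp [w]; omega
  refine ⟨w, mem_lang_iff.mpr (admissibleWord_append_iff.mpr ⟨admissibleWord_replicate_zero _,
    admissibleWord_prefixWord hd.1 k, fun r hr => ?_⟩), hlen, ?_⟩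
  · obtain rfl : r = 0 := by
      by_contra h
      exact hd.not_prefixWord_suffix_replicate_append (v := []) (Nat.pos_of_ne_zero h)
        (by simpa using hr)
    exact wordLeSeq_prefixWord d k
  · rw [classIndex, Nat.findGreatest_eq_iff]
    exact ⟨hk, fun _ => List.suffix_append _ _, fun r hkr _ =>
      hd.not_prefixWord_suffix_replicate_append (by simpa using hkr)⟩

theorem Admissible.folSets_eq [NeZero m] (hd : Admissible d) (n : ℕ) :
    {S | ∃ w ∈ Lang d, w.length = n ∧ S = Fol d w} =
      followerOf d '' ((shift^[·] d) '' Set.Iic n) := by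
  rw [Set.image_image]
  ext S
  constructor
  · rintro ⟨w, hw, rfl, rfl⟩
    exact ⟨_, Nat.findGreatest_le _, (hd.fol_eq hw).symm⟩
  · rintro ⟨k, hk, rfl⟩
    obtain ⟨w, hw, hlen, hK⟩ := hd.exists_mem_lang_classIndex_eq hk
    exact ⟨w, hw, hlen, by rw [hd.fol_eq hw, hlen, hK]⟩

end BetaShift

open BetaShift

theorem stmt8_general (m : ℕ) (d : ℕ → Fin m) (hd : Admissible d)
    (hper : EventuallyPeriodic d) :
    {j : ℕ | ∃ k, k < j ∧ shift^[k] d = shift^[j] d}.Nonempty ∧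
    ∀ n : ℕ,
      (n < sInf {j : ℕ | ∃ k, k < j ∧ shift^[k] d = shift^[j] d} →
        FolCount d n = n + 1) ∧
      (sInf {j : ℕ | ∃ k, k < j ∧ shift^[k] d = shift^[j] d} ≤ n →
        FolCount d n = sInf {j : ℕ | ∃ k, k < j ∧ shift^[k] d = shift^[j] d}) := by
  have : NeZero m := ⟨(d 0).pos.ne'⟩
  have hS := hper.nonempty_iterate_shift_eq
  have hcount : ∀ n, FolCount d n =
      min (n + 1) (sInf {j : ℕ | ∃ k, k < j ∧ shift^[k] d = shift^[j] d}) := fun n => by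
    have horbit : (shift^[·] d) '' Set.Iic n ⊆ XSet d := by
      rintro _ ⟨k, -, rfl⟩
      exact iterate_shift_mem_xSet hd.1 k
    rw [FolCount, hd.folSets_eq, (followerOf_injOn.mono horbit).ncard_image,
      ncard_image_iterate_Iic _ _ hS]
  refine ⟨hS, fun n => ⟨fun hn => ?_, fun hn => ?_⟩⟩
  · rw [hcount, min_eq_left hn]
  · rw [hcount, min_eq_right (by omega)]

/-- for sofic (eventually periodic) `d`, with `p` the least `j` such
that `σ^k d = σ^j d` for some `k < j`, `|F(n)| = n+1` for `n < p` and `|F(n)| = p`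
for `n ≥ p`. -/
theorem stmt8 (m : ℕ) (hm : 1 ≤ m) (d : ℕ → Fin m) (hd : Admissible d)
    (hper : EventuallyPeriodic d) :
    {j : ℕ | ∃ k, k < j ∧ shift^[k] d = shift^[j] d}.Nonempty ∧
    ∀ n : ℕ,
      (n < sInf {j : ℕ | ∃ k, k < j ∧ shift^[k] d = shift^[j] d} →
        FolCount d n = n + 1) ∧
      (sInf {j : ℕ | ∃ k, k < j ∧ shift^[k] d = shift^[j] d} ≤ n →
        FolCount d n = sInf {j : ℕ | ∃ k, k < j ∧ shift^[k] d = shift^[j] d}) :=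
  stmt8_general m d hd hper
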